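/- For a partition lambda with m_i parts of size i, define d_i = 1*m_1 + 2*m_2 + ... + (i-1)*m_{i-1} + i*(m_i + m_{i+1} + ...). Then prod_i prod_{k=1}^{m_i} (q^{d_i} - q^{d_i - k}) = q^{2[sum_{h<i} h m_h m_i + (1/2) sum_i (i-1) m_i^2]} * prod_i |GL(m_i, q)|. -/

import Mathlib

/-!
Pulling `q^(d_i - m_i)` out of every factor turns the inner product for `i` into
`q^(m_i (d_i - m_i)) |GL(m_i, q)|`. It remains to evaluate `∑_i m_i d_i`: the part
`∑_i m_i ∑_{h<i} h m_h` is the first half of the cross term, and exchanging the order of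
summation in `∑_i i m_i ∑_{k ≥ i} m_k` yields the second half together with `∑_i i m_i²`.
-/

open Finset

/-- `d i = 1*m_1 + 2*m_2 + ... + (i-1)*m_{i-1} + i*(m_i + m_{i+1} + ...)` for a partition
with multiplicities `m`. -/
def dPart (m : ℕ →₀ ℕ) (i : ℕ) : ℕ :=
  (∑ h ∈ Finset.range i, h * m h) + i * ∑ k ∈ m.support.filter (fun k => i ≤ k), m k

theorem prod_Icc_pow_sub_pow {R : Type*} [CommRing R] (q : R) {d n : ℕ} (hnd : n ≤ d) :
    ∏ k ∈ Icc 1 n, (q ^ d - q ^ (d - k)) =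
      q ^ (n * (d - n)) * ∏ j ∈ range n, (q ^ n - q ^ j) := by
  have hfactor : ∀ k ∈ Icc 1 n, q ^ d - q ^ (d - k) = q ^ (d - n) * (q ^ n - q ^ (n - k)) := by
    intro k hk
    rw [mem_Icc] at hk
    rw [mul_sub, ← pow_add, ← pow_add]
    congr 2 <;> omega
  have hreflect : ∏ k ∈ Icc 1 n, (q ^ n - q ^ (n - k)) = ∏ j ∈ range n, (q ^ n - q ^ j) := by
    refine prod_nbij' (fun k => n - k) (fun j => n - j) ?_ ?_ ?_ ?_ ?_ <;>
      intro a ha <;> simp only [mem_Icc, mem_range] at ha ⊢ <;> omega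
  rw [prod_congr rfl hfactor, prod_mul_distrib, prod_const, Nat.card_Icc, Nat.add_sub_cancel,
    ← pow_mul, mul_comm (d - n), hreflect]

theorem sum_mul_sum_filter_le {R : Type*} [CommSemiring R] (S : Finset ℕ) (a b : ℕ → R) :
    ∑ i ∈ S, a i * ∑ k ∈ S with i ≤ k, b k =
      ∑ k ∈ S, b k * ∑ i ∈ S with i < k, a i + ∑ i ∈ S, a i * b i := by
  have hsplit : ∀ i k : ℕ, (if i ≤ k then a i * b k else 0) =
      (if i < k then a i * b k else 0) + (if i = k then a i * b k else 0) := by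
    intro i k
    rcases lt_trichotomy i k with h | rfl | h
    · simp [h.le, h, h.ne]
    · simp
    · simp [not_le_of_gt h, not_lt_of_gt h, h.ne']
  simp only [sum_filter, mul_sum, mul_ite, mul_zero, hsplit, sum_add_distrib, sum_ite_eq]
  rw [sum_comm]
  simp [mul_comm]

namespace Finsupp

theorem sum_range_mul_apply_eq_sum_support (m : ℕ →₀ ℕ) (i : ℕ) :
    ∑ h ∈ range i, h * m h = ∑ h ∈ m.support with h < i, h * m h := by
  refine (sum_subset (fun h hh => mem_range.2 (mem_filter.1 hh).2) fun h hi hh => ?_).symm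
  have : h ∉ m.support := fun hs => hh (mem_filter.2 ⟨hs, mem_range.1 hi⟩)
  rw [notMem_support_iff.1 this, mul_zero]

theorem pos_of_mem_support {M : Type*} [Zero M] (f : ℕ →₀ M) (hf0 : f 0 = 0) {i : ℕ}
    (hi : i ∈ f.support) : 0 < i :=
  Nat.pos_of_ne_zero fun h => mem_support_iff.1 hi (h ▸ hf0)

end Finsupp

theorem le_dPart (m : ℕ →₀ ℕ) {i : ℕ} (hi : 0 < i) : m i ≤ dPart m i := by
  by_cases hmi : m i = 0
  · exact hmi ▸ Nat.zero_le _
  have hmem : i ∈ m.support.filter (i ≤ ·) :=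
    mem_filter.2 ⟨Finsupp.mem_support_iff.2 hmi, le_rfl⟩
  calc m i ≤ ∑ k ∈ m.support with i ≤ k, m k :=
        Finset.single_le_sum (fun _ _ => Nat.zero_le _) hmem
    _ ≤ i * ∑ k ∈ m.support with i ≤ k, m k := Nat.le_mul_of_pos_left _ hi
    _ ≤ dPart m i := Nat.le_add_left _ _

theorem sum_mul_dPart (m : ℕ →₀ ℕ) :
    ∑ i ∈ m.support, m i * dPart m i =
      2 * ∑ i ∈ m.support, m i * ∑ h ∈ range i, h * m h + ∑ i ∈ m.support, i * m i ^ 2 := by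
  have hcross := sum_mul_sum_filter_le m.support (fun i => i * m i) m
  simp only [← Finsupp.sum_range_mul_apply_eq_sum_support] at hcross
  have hsplit : ∀ i, m i * dPart m i =
      m i * ∑ h ∈ range i, h * m h + i * m i * ∑ k ∈ m.support with i ≤ k, m k := by
    intro i
    simp only [dPart]
    ring
  rw [Finset.sum_congr rfl fun i _ => hsplit i, sum_add_distrib, hcross]
  simp only [sq, ← mul_assoc]
  ring

theorem sum_mul_dPart_sub (m : ℕ →₀ ℕ) (hm0 : m 0 = 0) :
    ∑ i ∈ m.support, m i * (dPart m i - m i) =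
      2 * ∑ i ∈ m.support, m i * ∑ h ∈ range i, h * m h
        + ∑ i ∈ m.support, (i - 1) * m i ^ 2 := by
  have hleft : ∑ i ∈ m.support, m i * (dPart m i - m i) + ∑ i ∈ m.support, m i ^ 2 =
      ∑ i ∈ m.support, m i * dPart m i := by
    rw [← sum_add_distrib]
    refine Finset.sum_congr rfl fun i hi => ?_
    rw [sq, ← Nat.mul_add, Nat.sub_add_cancel (le_dPart m (m.pos_of_mem_support hm0 hi))]
  have hright : ∑ i ∈ m.support, (i - 1) * m i ^ 2 + ∑ i ∈ m.support, m i ^ 2 =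
      ∑ i ∈ m.support, i * m i ^ 2 := by
    rw [← sum_add_distrib]
    refine Finset.sum_congr rfl fun i hi => ?_
    rw [← Nat.succ_mul, Nat.succ_eq_add_one, Nat.sub_add_cancel (m.pos_of_mem_support hm0 hi)]
  have := sum_mul_dPart m
  omega

/-- `∏_i ∏_{k=1}^{m_i} (q^{d_i} - q^{d_i - k})
      = q^{2[∑_{h<i} h m_h m_i + (1/2)∑_i (i-1) m_i²]} ∏_i |GL(m_i, q)|`. -/
theorem stmt3 (q : ℚ) (m : ℕ →₀ ℕ) (hm0 : m 0 = 0) :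
    (∏ i ∈ m.support, ∏ k ∈ Finset.Icc 1 (m i),
        (q ^ (dPart m i) - q ^ (dPart m i - k))) =
      q ^ (2 * (∑ i ∈ m.support, (m i) * ∑ h ∈ Finset.range i, h * m h)
            + ∑ i ∈ m.support, (i - 1) * (m i) ^ 2) *
        ∏ i ∈ m.support, ∏ j ∈ Finset.range (m i), (q ^ (m i) - q ^ j) := by
  have hfactor : ∀ i ∈ m.support,
      ∏ k ∈ Icc 1 (m i), (q ^ dPart m i - q ^ (dPart m i - k)) =
        q ^ (m i * (dPart m i - m i)) * ∏ j ∈ range (m i), (q ^ m i - q ^ j) :=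
    fun i hi => prod_Icc_pow_sub_pow q (le_dPart m (m.pos_of_mem_support hm0 hi))
  rw [prod_congr rfl hfactor, prod_mul_distrib, prod_pow_eq_pow_sum,
    sum_mul_dPart_sub m hm0]
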